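/- arXiv:0906.2279 — 5 statements merged into one kernel-verified Lean document; each statement's English description precedes it below -/
import Mathlib

section
/- For α > -1 and nonnegative integer n, the determinant of the (n+1)×(n+1) Hankel matrix with entries (α+1)_{j+k} for 0 ≤ j,k ≤ n equals ∏_{k=0}^{n} k!·(α+1)_k. -/
/-!
The Hankel matrix `((x)_{j+k})` factors as `L * U`, where `L j i = C(j,i) (x+i)_{j-i}` is
unitriangular and `U i k = k^{(i)} (x)_k` (falling factorial `k^{(i)}`) is upper triangular with
diagonal `k! (x)_k`. Entrywise this is `(x)_{j+k} = (x)_k (x+k)_j` together with the expansion of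
`(x+k)_j`, which is Chu–Vandermonde for falling factorials once the rising factorial is written
as `(y)_j = (y+j-1)^{(j)}`.
-/

/-- The shifted factorial (Pochhammer symbol) (x)ₙ = x(x+1)⋯(x+n-1),
which equals Γ(x+n)/Γ(x) when x > 0. -/
noncomputable def poch (x : ℝ) (n : ℕ) : ℝ := ∏ i ∈ Finset.range n, (x + i)

open Finset Polynomial Matrix

lemma poch_add (x : ℝ) (a b : ℕ) : poch x (a + b) = poch x a * poch (x + a) b := by
  simp only [poch, prod_range_add, Nat.cast_add, add_assoc]

lemma poch_eq_ascPochhammer_eval (x : ℝ) (n : ℕ) : poch x n = (ascPochhammer ℝ n).eval x := by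
  induction n with
  | zero => simp [poch]
  | succ n ih => rw [poch, prod_range_succ, ← poch, ih, ascPochhammer_succ_eval]

lemma poch_eq_descPochhammer_smeval (x : ℝ) (n : ℕ) :
    poch x n = (descPochhammer ℤ n).smeval (x + n - 1) := by
  rw [descPochhammer_smeval_eq_ascPochhammer, ascPochhammer_smeval_eq_eval,
    poch_eq_ascPochhammer_eval]
  ring_nf

lemma poch_add_natCast (x : ℝ) (k j : ℕ) :
    poch (x + k) j =
      ∑ i ∈ range (j + 1), j.choose i * poch (x + i) (j - i) * k.descFactorial i := by
  rw [poch_eq_descPochhammer_smeval, add_right_comm, add_sub_right_comm,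
    Ring.descPochhammer_smeval_add _ (Commute.all _ _), Nat.sum_antidiagonal_eq_sum_range_succ_mk,
    ← sum_range_reflect]
  refine sum_congr rfl fun i hi => ?_
  have hij : i ≤ j := Nat.lt_succ_iff.mp (mem_range.mp hi)
  rw [Nat.succ_sub_one, Nat.sub_sub_self hij, Nat.choose_symm hij,
    descPochhammer_smeval_eq_descFactorial, poch_eq_descPochhammer_smeval, Nat.cast_sub hij]
  ring_nf

noncomputable def pochLower (x : ℝ) (n : ℕ) : Matrix (Fin n) (Fin n) ℝ :=
  of fun j i => j.1.choose i.1 * poch (x + i.1) (j.1 - i.1)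

noncomputable def pochUpper (x : ℝ) (n : ℕ) : Matrix (Fin n) (Fin n) ℝ :=
  of fun i k => k.1.descFactorial i.1 * poch x k.1

lemma of_poch_add_eq_pochLower_mul_pochUpper (x : ℝ) (n : ℕ) :
    of (fun j k : Fin n => poch x (j.1 + k.1)) = pochLower x n * pochUpper x n := by
  ext j k
  have hj : range (j.1 + 1) ⊆ range n := range_subset_range.2 j.2
  rw [of_apply, add_comm, poch_add, poch_add_natCast, mul_apply, mul_sum,
    sum_subset hj fun i _ hi => by simp [Nat.choose_eq_zero_of_lt (not_lt.1 (mem_range.not.1 hi))],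
    ← Fin.sum_univ_eq_sum_range]
  simp only [pochLower, pochUpper, of_apply]
  exact sum_congr rfl fun _ _ => by ring

lemma isLowerTriangular_pochLower (x : ℝ) (n : ℕ) : (pochLower x n).IsLowerTriangular :=
  fun j i (h : j < i) => by simp [pochLower, Nat.choose_eq_zero_of_lt h]

lemma isUpperTriangular_pochUpper (x : ℝ) (n : ℕ) : (pochUpper x n).IsUpperTriangular :=
  fun i k (h : k < i) => by simp [pochUpper, Nat.descFactorial_eq_zero_iff_lt.2 h]

lemma det_pochLower (x : ℝ) (n : ℕ) : (pochLower x n).det = 1 := by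
  rw [det_of_isLowerTriangular _ (isLowerTriangular_pochLower x n)]
  simp [pochLower, poch]

lemma det_pochUpper (x : ℝ) (n : ℕ) :
    (pochUpper x n).det = ∏ k ∈ range n, (k.factorial : ℝ) * poch x k := by
  rw [det_of_isUpperTriangular (isUpperTriangular_pochUpper x n), ← Fin.prod_univ_eq_prod_range]
  simp only [pochUpper, of_apply, Nat.descFactorial_self]

theorem stmt_1_general (α : ℝ) (n : ℕ) :
    (Matrix.of fun j k : Fin (n+1) => poch (α+1) (j.1 + k.1)).det =
      ∏ k ∈ Finset.range (n+1), (Nat.factorial k : ℝ) * poch (α+1) k := by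
  rw [of_poch_add_eq_pochLower_mul_pochUpper, det_mul, det_pochLower, det_pochUpper, one_mul]

/-- det ((α+1)_{j+k})_{0 ≤ j,k ≤ n} = ∏_{k=0}^n k! (α+1)_k. -/
theorem stmt_1 (α : ℝ) (hα : -1 < α) (n : ℕ) :
    (Matrix.of fun j k : Fin (n+1) => poch (α+1) (j.1 + k.1)).det =
      ∏ k ∈ Finset.range (n+1), (Nat.factorial k : ℝ) * poch (α+1) k :=
  stmt_1_general α n
end

section
/- Let P be a probability measure on ℝ with positive definite moment matrices G_n and orthonormal polynomials p_m. If z₀ ∈ ℂ with |z₀| = 1 is such that for each m the numbers a_{m,k} z₀^k (k = 0,…,m) all have the same sign (as real numbers times a common phase), then the smallest eigenvalue λ_s of G_n satisfies λ_s ≥ 1 / Σ_{m=0}^{n} |p_m(z₀)|². -/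
/-!
Orthonormality of the `p_m` says `A G Aᵀ = 1` for the coefficient matrix `A = (a_{m,k})`, so
`G⁻¹ = Aᵀ A`. Writing an eigenvector as `v = Aᵀ d` gives `λ |v|² = vᵀ G v = |d|²`, while
Cauchy–Schwarz gives `|v|² ≤ (Σ_{m,k} a_{m,k}²) |d|²`. The phase condition makes the terms
`a_{m,k} z₀^k` of `p_m(z₀)` point in one direction, so
`Σ_k a_{m,k}² ≤ (Σ_k |a_{m,k}|)² = |p_m(z₀)|²`.
-/

open MeasureTheory Matrix Polynomial Finset

namespace Matrix

variable {ι κ : Type*} [Fintype ι] [Fintype κ]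

theorem mulVec_dotProduct_mulVec_self_le (B : Matrix ι κ ℝ) (d : κ → ℝ) :
    B *ᵥ d ⬝ᵥ B *ᵥ d ≤ (∑ i, ∑ j, B i j ^ 2) * (d ⬝ᵥ d) := by
  simp only [dotProduct, mulVec, ← sq]
  rw [sum_mul]
  gcongr with i
  exact sum_mul_sq_le_sq_mul_sq univ (B i) d

variable [DecidableEq ι]

theorem dotProduct_self_le_of_mul_mul_transpose_eq_one {A G : Matrix ι ι ℝ}
    (h : A * G * Aᵀ = 1) (v : ι → ℝ) :
    v ⬝ᵥ v ≤ (∑ i, ∑ j, A i j ^ 2) * (v ⬝ᵥ G *ᵥ v) := by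
  have hinv : Aᵀ * (A * G) = 1 := mul_eq_one_comm.mp h
  obtain ⟨d, rfl⟩ : ∃ d, v = Aᵀ *ᵥ d :=
    ⟨(A * G) *ᵥ v, by rw [mulVec_mulVec, hinv, one_mulVec]⟩
  have hquad : Aᵀ *ᵥ d ⬝ᵥ G *ᵥ Aᵀ *ᵥ d = d ⬝ᵥ d := by
    rw [mulVec_mulVec, mulVec_transpose, ← dotProduct_mulVec, mulVec_mulVec,
      ← Matrix.mul_assoc, h, one_mulVec]
  calc Aᵀ *ᵥ d ⬝ᵥ Aᵀ *ᵥ d ≤ (∑ i, ∑ j, Aᵀ i j ^ 2) * (d ⬝ᵥ d) :=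
        mulVec_dotProduct_mulVec_self_le _ _
    _ = (∑ i, ∑ j, A i j ^ 2) * (Aᵀ *ᵥ d ⬝ᵥ G *ᵥ Aᵀ *ᵥ d) := by
        rw [hquad, sum_comm]; rfl

theorem one_le_sum_sq_mul_of_hasEigenvalue {A G : Matrix ι ι ℝ} (h : A * G * Aᵀ = 1)
    {lam : ℝ} (hlam : Module.End.HasEigenvalue (toLin' G) lam) :
    1 ≤ (∑ i, ∑ j, A i j ^ 2) * lam := by
  obtain ⟨v, hv⟩ := hlam.exists_hasEigenvector
  have hGv : G *ᵥ v = lam • v := by simpa [toLin'_apply] using hv.apply_eq_smul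
  have hpos : 0 < v ⬝ᵥ v :=
    lt_of_le_of_ne' (sum_nonneg fun i _ => mul_self_nonneg (v i))
      (mt dotProduct_self_eq_zero.mp hv.2)
  have := dotProduct_self_le_of_mul_mul_transpose_eq_one h v
  rw [hGv, dotProduct_smul, smul_eq_mul, ← mul_assoc] at this
  exact (le_mul_iff_one_le_left hpos).mp this

end Matrix

theorem sum_norm_sq_le_norm_sum_sq_of_nonneg_smul {ι E : Type*} [SeminormedAddCommGroup E]
    [NormedSpace ℝ E] (s : Finset ι) (f : ι → E) (c : E)
    (hf : ∀ i ∈ s, ∃ r : ℝ, 0 ≤ r ∧ f i = r • c) :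
    ∑ i ∈ s, ‖f i‖ ^ 2 ≤ ‖∑ i ∈ s, f i‖ ^ 2 := by
  choose! r hr_nonneg hr using hf
  have hnorm : ∀ i ∈ s, ‖f i‖ = r i * ‖c‖ := fun i hi => by
    rw [hr i hi, norm_smul, Real.norm_of_nonneg (hr_nonneg i hi)]
  have hsum : ‖∑ i ∈ s, f i‖ = (∑ i ∈ s, r i) * ‖c‖ := by
    rw [sum_congr rfl hr, ← sum_smul, norm_smul, Real.norm_of_nonneg (sum_nonneg hr_nonneg)]
  rw [sum_congr rfl fun i hi => by rw [hnorm i hi], hsum]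
  simp only [mul_pow, ← sum_mul]
  gcongr
  exact sum_sq_le_sq_sum_of_nonneg hr_nonneg

theorem Polynomial.coeff_sum_C_mul_X_pow {R : Type*} [Semiring R] (s : Finset ℕ) (a : ℕ → R)
    (k : ℕ) : (∑ j ∈ s, C (a j) * X ^ j).coeff k = if k ∈ s then a k else 0 := by
  simp [finsetSum_coeff]

theorem integral_eval_mul_eval_eq_sum_moments {P : Measure ℝ}
    (hint : ∀ m : ℕ, Integrable (fun x : ℝ => x ^ m) P) {N : ℕ} {p q : ℝ[X]}
    (hp : p.natDegree < N) (hq : q.natDegree < N) :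
    ∫ x, p.eval x * q.eval x ∂P
      = ∑ j ∈ range N, ∑ k ∈ range N, p.coeff j * q.coeff k * ∫ x, x ^ (j + k) ∂P := by
  have hterm : ∀ j k, Integrable (fun x => p.coeff j * q.coeff k * x ^ (j + k)) P :=
    fun j k => (hint (j + k)).const_mul _
  have hprod : ∀ x, p.eval x * q.eval x
      = ∑ j ∈ range N, ∑ k ∈ range N, p.coeff j * q.coeff k * x ^ (j + k) := fun x => by
    simp only [eval_eq_sum_range' hp, eval_eq_sum_range' hq, sum_mul_sum, pow_add,
      mul_mul_mul_comm]
  simp_rw [hprod]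
  rw [integral_finsetSum _ fun j _ => integrable_finsetSum _ fun k _ => hterm j k]
  refine sum_congr rfl fun j _ => ?_
  rw [integral_finsetSum _ fun k _ => hterm j k]
  simp_rw [integral_const_mul]

theorem coeff_mul_hankel_mul_transpose {ι : Type*} [Fintype ι] {P : Measure ℝ}
    (hint : ∀ m : ℕ, Integrable (fun x : ℝ => x ^ m) P) {N : ℕ} (p : ι → ℝ[X])
    (hp : ∀ i, (p i).natDegree < N) :
    (of fun (i : ι) (k : Fin N) => (p i).coeff k) *
        (of fun j k : Fin N => ∫ x, x ^ (j.1 + k.1) ∂P) *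
        (of fun (i : ι) (k : Fin N) => (p i).coeff k)ᵀ
      = of fun i l => ∫ x, (p i).eval x * (p l).eval x ∂P := by
  ext i l
  rw [of_apply, integral_eval_mul_eval_eq_sum_moments hint (hp i) (hp l),
    ← Fin.sum_univ_eq_sum_range]
  simp only [mul_apply, of_apply, transpose_apply, sum_mul]
  rw [sum_comm]
  refine sum_congr rfl fun j _ => ?_
  rw [← Fin.sum_univ_eq_sum_range
    (fun k => (p i).coeff j * (p l).coeff k * ∫ x, x ^ (j + k) ∂P)]
  exact sum_congr rfl fun k _ => by ring

theorem stmt_6_general (P : Measure ℝ)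
    (μ : ℕ → ℝ) (a : ℕ → ℕ → ℝ) (n : ℕ) (z₀ : ℂ)
    (hint : ∀ m : ℕ, Integrable (fun x : ℝ => x ^ m) P)
    (hμ : ∀ m : ℕ, μ m = ∫ x, x ^ m ∂P)
    (horth : ∀ m l : ℕ,
      (∫ x, (∑ k ∈ Finset.range (m+1), a m k * x ^ k) *
            (∑ k ∈ Finset.range (l+1), a l k * x ^ k) ∂P)
        = if m = l then 1 else 0)
    (hz₀ : ‖z₀‖ = 1)
    (hsign : ∀ m : ℕ, ∃ c : ℂ, ‖c‖ = 1 ∧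
      ∀ k ≤ m, ∃ r : ℝ, 0 ≤ r ∧ (a m k : ℂ) * z₀ ^ k = (r : ℂ) * c)
    (lam : ℝ)
    (hlam : Module.End.HasEigenvalue
      (Matrix.toLin' (Matrix.of fun j k : Fin (n+1) => μ (j.1 + k.1))) lam) :
    1 / (∑ m ∈ Finset.range (n+1),
          ‖∑ k ∈ Finset.range (m+1), (a m k : ℂ) * z₀ ^ k‖ ^ 2) ≤ lam := by
  set p : Fin (n + 1) → ℝ[X] := fun m => ∑ k ∈ range (m + 1), C (a m k) * X ^ k
  set A := of fun (m : Fin (n + 1)) (k : Fin (n + 1)) => (p m).coeff k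
  have hgram : A * (of fun j k : Fin (n + 1) => μ (j.1 + k.1)) * Aᵀ = 1 := by
    simp_rw [hμ]
    rw [coeff_mul_hankel_mul_transpose hint p fun m => ?_]
    · ext m l
      simp [p, eval_finsetSum, horth, one_apply, Fin.ext_iff]
    · refine (natDegree_le_iff_coeff_eq_zero.mpr fun k hk => ?_).trans_lt m.2
      rw [coeff_sum_C_mul_X_pow, if_neg (by rw [mem_range]; omega)]
  have hrow : ∀ m : Fin (n + 1),
      ∑ k, A m k ^ 2 ≤ ‖∑ k ∈ range (m + 1), (a m k : ℂ) * z₀ ^ k‖ ^ 2 := by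
    intro m
    obtain ⟨c, -, hc⟩ := hsign m
    have hnorm : ∀ k, ‖(a m k : ℂ) * z₀ ^ k‖ ^ 2 = a m k ^ 2 := fun k => by
      rw [norm_mul, norm_pow, hz₀, one_pow, mul_one, Complex.norm_real, Real.norm_eq_abs, sq_abs]
    calc ∑ k, A m k ^ 2
        = ∑ k ∈ range (n + 1) ∩ range (m + 1), a m k ^ 2 := by
          change ∑ k : Fin (n + 1), (p m).coeff k ^ 2 = _
          rw [Fin.sum_univ_eq_sum_range (fun k => (p m).coeff k ^ 2), ← sum_ite_mem]
          simp only [p, coeff_sum_C_mul_X_pow, ite_pow, zero_pow two_ne_zero]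
      _ ≤ ∑ k ∈ range (m + 1), ‖(a m k : ℂ) * z₀ ^ k‖ ^ 2 := by
          simp only [hnorm]
          exact sum_le_sum_of_subset_of_nonneg inter_subset_right fun k _ _ => sq_nonneg _
      _ ≤ _ := sum_norm_sq_le_norm_sum_sq_of_nonneg_smul _ _ c fun k hk => by
        simpa [Complex.real_smul] using hc k (Nat.lt_succ_iff.mp (mem_range.mp hk))
  have hone := one_le_sum_sq_mul_of_hasEigenvalue hgram hlam
  have hfrob_nonneg : 0 ≤ ∑ m, ∑ k, A m k ^ 2 := by positivity
  have hlam_nonneg : 0 ≤ lam :=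
    le_of_not_gt fun h => by linarith [mul_nonpos_of_nonneg_of_nonpos hfrob_nonneg h.le]
  rw [← Fin.sum_univ_eq_sum_range
    (fun m => ‖∑ k ∈ range (m + 1), (a m k : ℂ) * z₀ ^ k‖ ^ 2)]
  refine div_le_of_le_mul₀ (by positivity) hlam_nonneg ?_
  rw [mul_comm lam]
  exact hone.trans (mul_le_mul_of_nonneg_right (sum_le_sum fun m _ => hrow m) hlam_nonneg)

/-- If z₀ ∈ ℂ with |z₀| = 1 is such that, for each m, the numbers a_{m,k} z₀^k
(k = 0,…,m) are all nonnegative multiples of a common unit phase, then every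
eigenvalue (in particular the smallest) of the moment matrix G_n satisfies
λ ≥ 1 / Σ_{m=0}^n |p_m(z₀)|². -/
theorem stmt_6 (P : Measure ℝ) [IsProbabilityMeasure P]
    (μ : ℕ → ℝ) (a : ℕ → ℕ → ℝ) (n : ℕ) (z₀ : ℂ)
    (hint : ∀ m : ℕ, Integrable (fun x : ℝ => x ^ m) P)
    (hμ : ∀ m : ℕ, μ m = ∫ x, x ^ m ∂P)
    (htri : ∀ m k : ℕ, m < k → a m k = 0)
    (hlead : ∀ m : ℕ, 0 < a m m)
    (horth : ∀ m l : ℕ,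
      (∫ x, (∑ k ∈ Finset.range (m+1), a m k * x ^ k) *
            (∑ k ∈ Finset.range (l+1), a l k * x ^ k) ∂P)
        = if m = l then 1 else 0)
    (hpd : (Matrix.of fun j k : Fin (n+1) => μ (j.1 + k.1)).PosDef)
    (hz₀ : ‖z₀‖ = 1)
    (hsign : ∀ m : ℕ, ∃ c : ℂ, ‖c‖ = 1 ∧
      ∀ k ≤ m, ∃ r : ℝ, 0 ≤ r ∧ (a m k : ℂ) * z₀ ^ k = (r : ℂ) * c)
    (lam : ℝ)
    (hlam : Module.End.HasEigenvalue
      (Matrix.toLin' (Matrix.of fun j k : Fin (n+1) => μ (j.1 + k.1))) lam) :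
    1 / (∑ m ∈ Finset.range (n+1),
          ‖∑ k ∈ Finset.range (m+1), (a m k : ℂ) * z₀ ^ k‖ ^ 2) ≤ lam :=
  stmt_6_general P μ a n z₀ hint hμ horth hz₀ hsign lam hlam
end

section
/- For 0 < q < 1, α > -1 and nonnegative integer n, det( ((q^{α+1};q)_{j+k} q^{-(j+k)(j+k+1)/2 - α(j+k)})_{j,k=0}^{n} ) = q^{-n(n+1)(4n+6α+5)/6} ∏_{m=0}^{n} (q;q)_m (q^{α+1};q)_m. -/
/-!
Since `(a;q)_{j+k} = (a;q)_j (aq^j;q)_k` and `q^{-jk} (aq^j;q)_k = ∏_{i<k} (q^{-j} - a qⁱ)`, and the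
weight `w(s) = q^{-s(s+1)/2 - αs}` satisfies `w(j+k) = w(j) w(k) q^{-jk}`, the `(j,k)` entry is
`(a;q)_j w(j) · w(k) · P_k(q^{-j})` with `P_k = ∏_{i<k} (X - a qⁱ)` monic of degree `k`
(here `a = q^{α+1}`). Column operations reduce `(P_k(x_j))` to the Vandermonde matrix of the nodes
`x_j = q^{-j}`, whose determinant `∏_{i<j} (q^{-j} - q^{-i})` equals `∏_j q^{-j²} (q;q)_j`.
-/

/-- The q-Pochhammer symbol (a;q)ₘ = ∏_{i=0}^{m-1}(1 - a qⁱ). -/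
noncomputable def qPoch (a q : ℝ) (n : ℕ) : ℝ := ∏ i ∈ Finset.range n, (1 - a * q ^ i)

open Finset Polynomial

theorem Fin.prod_prod_Ioi_eq_prod_range_prod_range {M : Type*} [CommMonoid M]
    (f : ℕ → ℕ → M) (n : ℕ) :
    ∏ i : Fin n, ∏ j ∈ Ioi i, f i j = ∏ j ∈ range n, ∏ i ∈ range j, f i j := by
  rw [prod_comm' (t' := univ) (s' := Iio) (by simp [and_comm]),
    ← Fin.prod_univ_eq_prod_range (fun j => ∏ i ∈ range j, f i j)]
  refine prod_congr rfl fun j _ => ?_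
  rw [← Nat.Iio_eq_range, ← Fin.map_valEmbedding_Iio, prod_map]
  rfl

namespace Matrix

variable {R : Type*} [CommRing R]

theorem det_vandermonde_eq_prod_range (v : ℕ → R) (n : ℕ) :
    (vandermonde fun i : Fin n => v i).det = ∏ j ∈ range n, ∏ i ∈ range j, (v j - v i) := by
  rw [det_vandermonde, Fin.prod_prod_Ioi_eq_prod_range_prod_range (fun i j => v j - v i)]

theorem det_of_mul_mul_eval (d e v : ℕ → R) (P : ℕ → R[X])
    (hdeg : ∀ k, (P k).natDegree = k) (hmonic : ∀ k, (P k).Monic) (n : ℕ) :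
    (of fun j k : Fin n => d j * e k * (P k).eval (v j)).det =
      ∏ m ∈ range n, (d m * e m * ∏ i ∈ range m, (v m - v i)) := by
  have hV := det_eval_matrixOfPolynomials_eq_det_vandermonde (fun j : Fin n => v j)
    (fun k => P k) (fun k => hdeg k) (fun k => hmonic k)
  have hd := det_mul_column (fun j : Fin n => d j) (of fun j k : Fin n => e k * (P k).eval (v j))
  have he := det_mul_row (fun k : Fin n => e k) (of fun j k : Fin n => (P k).eval (v j))
  simp only [of_apply, ← mul_assoc] at hd he
  rw [hd, he, ← hV, det_vandermonde_eq_prod_range, Fin.prod_univ_eq_prod_range d,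
    Fin.prod_univ_eq_prod_range e, ← prod_mul_distrib, ← prod_mul_distrib]
  simp only [mul_assoc]

end Matrix

noncomputable def qPochPoly (a q : ℝ) (k : ℕ) : ℝ[X] := ∏ i ∈ range k, (X - C (a * q ^ i))

theorem qPochPoly_monic (a q : ℝ) (k : ℕ) : (qPochPoly a q k).Monic :=
  monic_prod_of_monic _ _ fun _ _ => monic_X_sub_C _

theorem natDegree_qPochPoly (a q : ℝ) (k : ℕ) : (qPochPoly a q k).natDegree = k := by
  rw [qPochPoly, natDegree_finsetProd_X_sub_C_eq_card, card_range]

theorem eval_qPochPoly (a q : ℝ) {y : ℝ} (hy : y ≠ 0) (k : ℕ) :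
    (qPochPoly a q k).eval y = y ^ k * qPoch (a / y) q k := by
  rw [qPochPoly, eval_prod, qPoch, show y ^ k = y ^ #(range k) by rw [card_range],
    pow_card_mul_prod]
  refine prod_congr rfl fun i _ => ?_
  simp only [eval_sub, eval_X, eval_C]
  field_simp

theorem qPoch_add (a q : ℝ) (j k : ℕ) :
    qPoch a q (j + k) = qPoch a q j * qPoch (a * q ^ j) q k := by
  rw [qPoch, prod_range_add]
  congr 1
  exact prod_congr rfl fun i _ => by rw [pow_add]; ring

theorem qPoch_add_mul_inv_pow (a : ℝ) {q : ℝ} (hq : q ≠ 0) (j k : ℕ) :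
    qPoch a q (j + k) * ((q ^ j)⁻¹) ^ k = qPoch a q j * (qPochPoly a q k).eval (q ^ j)⁻¹ := by
  rw [eval_qPochPoly a q (inv_ne_zero (pow_ne_zero j hq)), div_inv_eq_mul, qPoch_add]
  ring

theorem prod_range_inv_pow_sub_inv_pow {q : ℝ} (hq : q ≠ 0) (m : ℕ) :
    ∏ i ∈ range m, ((q ^ m)⁻¹ - (q ^ i)⁻¹) = ((q ^ m)⁻¹) ^ m * qPoch q q m := by
  rw [qPoch, ← prod_range_reflect (fun i => 1 - q * q ^ i) m,
    show ((q ^ m)⁻¹) ^ m = ((q ^ m)⁻¹) ^ #(range m) by rw [card_range], pow_card_mul_prod]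
  refine prod_congr rfl fun i hi => ?_
  have hmi : q * q ^ (m - 1 - i) * q ^ i = q ^ m := by
    rw [← pow_succ', ← pow_add]
    have := mem_range.1 hi
    congr 1
    omega
  rw [← hmi]
  field_simp

theorem inv_pow_pow_eq_rpow {q : ℝ} (hq : 0 < q) (j k : ℕ) :
    ((q ^ j)⁻¹) ^ k = q ^ (-((j : ℝ) * k)) := by
  rw [Real.rpow_neg hq.le, ← Nat.cast_mul, Real.rpow_natCast, pow_mul, inv_pow]

theorem rpow_hankel_weight_add {q : ℝ} (hq : 0 < q) (α : ℝ) (j k : ℕ) :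
    q ^ (-(((j : ℝ) + k) * ((j : ℝ) + k + 1)) / 2 - α * ((j : ℝ) + k)) =
      q ^ (-((j : ℝ) * (j + 1)) / 2 - α * j) * q ^ (-((k : ℝ) * (k + 1)) / 2 - α * k) *
        ((q ^ j)⁻¹) ^ k := by
  rw [inv_pow_pow_eq_rpow hq, ← Real.rpow_add hq, ← Real.rpow_add hq]
  ring_nf

theorem sum_range_hankel_weight_double (α : ℝ) (n : ℕ) :
    ∑ m ∈ range (n + 1), (-(((m : ℝ) + m) * ((m : ℝ) + m + 1)) / 2 - α * ((m : ℝ) + m)) =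
      -((n : ℝ) * (n + 1) * (4 * n + 6 * α + 5)) / 6 := by
  induction n with
  | zero => simp
  | succ n ih => rw [sum_range_succ, ih]; push_cast; ring

theorem stmt_12_general (q α : ℝ) (hq : 0 < q) (n : ℕ) :
    (Matrix.of fun j k : Fin (n+1) =>
        qPoch (q ^ (α+1)) q (j.1 + k.1) *
          q ^ (-(((j.1:ℝ) + k.1) * ((j.1:ℝ) + k.1 + 1)) / 2 - α * ((j.1:ℝ) + k.1))).det =
      q ^ (-((n:ℝ) * (n+1) * (4*n + 6*α + 5)) / 6) *
        ∏ m ∈ Finset.range (n+1), qPoch q q m * qPoch (q ^ (α+1)) q m := by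
  set a := q ^ (α + 1)
  set w : ℕ → ℝ := fun s => q ^ (-((s : ℝ) * (s + 1)) / 2 - α * s)
  have hentry : (Matrix.of fun j k : Fin (n+1) =>
        qPoch a q (j.1 + k.1) *
          q ^ (-(((j.1:ℝ) + k.1) * ((j.1:ℝ) + k.1 + 1)) / 2 - α * ((j.1:ℝ) + k.1))) =
      Matrix.of fun j k : Fin (n+1) =>
        (qPoch a q j * w j) * w k * (qPochPoly a q k).eval (q ^ j.1)⁻¹ := by
    ext j k
    simp only [Matrix.of_apply, w]
    rw [rpow_hankel_weight_add hq]
    linear_combination (w j * w k) * qPoch_add_mul_inv_pow a hq.ne' j k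
  have hdiag (m : ℕ) : qPoch a q m * w m * w m * ∏ i ∈ range m, ((q ^ m)⁻¹ - (q ^ i)⁻¹) =
      q ^ (-(((m : ℝ) + m) * ((m : ℝ) + m + 1)) / 2 - α * ((m : ℝ) + m)) *
        (qPoch q q m * qPoch a q m) := by
    rw [prod_range_inv_pow_sub_inv_pow hq.ne', rpow_hankel_weight_add hq]
    ring
  rw [hentry, Matrix.det_of_mul_mul_eval (fun j => qPoch a q j * w j) w (fun j => (q ^ j)⁻¹)
      (qPochPoly a q) (natDegree_qPochPoly a q) (qPochPoly_monic a q),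
    prod_congr rfl fun m _ => hdiag m, prod_mul_distrib, ← Real.rpow_sum_of_pos hq,
    sum_range_hankel_weight_double]

/-- det ((q^{α+1};q)_{j+k} q^{-(j+k)(j+k+1)/2-α(j+k)})_{j,k=0}^n
= q^{-n(n+1)(4n+6α+5)/6} ∏_{m=0}^n (q;q)_m (q^{α+1};q)_m. -/
theorem stmt_12 (q α : ℝ) (hq : 0 < q) (hq1 : q < 1) (hα : -1 < α) (n : ℕ) :
    (Matrix.of fun j k : Fin (n+1) =>
        qPoch (q ^ (α+1)) q (j.1 + k.1) *
          q ^ (-(((j.1:ℝ) + k.1) * ((j.1:ℝ) + k.1 + 1)) / 2 - α * ((j.1:ℝ) + k.1))).det =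
      q ^ (-((n:ℝ) * (n+1) * (4*n + 6*α + 5)) / 6) *
        ∏ m ∈ Finset.range (n+1), qPoch q q m * qPoch (q ^ (α+1)) q m :=
  stmt_12_general q α hq n
end

section
/- For 0 < q < 1 and complex b with |b| < 1, Cauchy's identity holds: Σ_{n=0}^{∞} q^{n(n-1)} bⁿ / ((q;q)ₙ (b;q)ₙ) = 1/(b;q)_∞. -/
/-- The q-Pochhammer symbol (a;q)ₙ = ∏_{i=0}^{n-1}(1 - a qⁱ) for complex a, real q. -/
noncomputable def qPochC (a : ℂ) (q : ℝ) (n : ℕ) : ℂ :=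
  ∏ i ∈ Finset.range n, (1 - a * (q:ℂ) ^ i)

/-- (b;q)_∞ = ∏_{m≥0}(1 - b q^m). -/
noncomputable def qPochInfC (b : ℂ) (q : ℝ) : ℂ := ∏' m : ℕ, (1 - b * (q:ℂ) ^ m)

/-!
Put `S_j(c) = ∑ₙ q^{n(n-1)+jn} cⁿ / ((q;q)ₙ (c;q)_{n+j})`. Comparing terms gives
`S_j - S_{j+1} = -c qʲ (S_{j+1} - S_{j+2})`, so `S_0 - S_1 = ∏_{i<j} (-c qⁱ) · (S_j - S_{j+1})`.
Since `|S_j| = O((1 - |c|)^{-j})` while the product decays like `|q|^{j(j-1)/2} |c|ʲ`,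
`S_0 = S_1`. Together with `(c;q)_{n+1} = (1 - c) (qc;q)ₙ` this is the functional equation
`S_0(qc) = (1 - c) S_0(c)`, whence `S_0(qᵏ b) = (b;q)ₖ S_0(b)`. As `k → ∞` the left side tends
to `S_0(0) = 1` by dominated convergence and `(b;q)ₖ → (b;q)_∞`.
-/

open Finset Filter Topology

theorem summable_prod_range_of_tendsto_zero {R : Type*} [NormedCommRing R] [CompleteSpace R]
    {a : ℕ → R} (ha : Tendsto a atTop (𝓝 0)) : Summable fun n => ∏ i ∈ range n, a i := by
  refine summable_of_ratio_norm_eventually_le (r := 1 / 2) (by norm_num) ?_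
  filter_upwards [(tendsto_norm_zero.comp ha).eventually_le_const (by norm_num : (0:ℝ) < 1 / 2)]
    with n hn
  rw [prod_range_succ, mul_comm (1 / 2 : ℝ)]
  exact (norm_mul_le _ _).trans (mul_le_mul_of_nonneg_left hn (norm_nonneg _))

theorem summable_pow_mul_sub_one_mul_pow {x : ℝ} (hx : |x| < 1) (ρ : ℝ) :
    Summable fun n : ℕ => x ^ (n * (n - 1)) * ρ ^ n := by
  have hx2 : x ^ 2 < 1 := by rwa [sq_lt_one_iff_abs_lt_one]
  have hprod (n : ℕ) : ∏ i ∈ range n, ((x ^ 2) ^ i * ρ) = x ^ (n * (n - 1)) * ρ ^ n := by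
    rw [prod_mul_distrib, prod_pow_eq_pow_sum, prod_const, card_range, ← pow_mul,
      mul_comm 2, sum_range_id_mul_two]
  simpa only [hprod] using summable_prod_range_of_tendsto_zero
    ((tendsto_pow_atTop_nhds_zero_of_lt_one (sq_nonneg x) hx2).mul_const ρ |>.trans (by simp))

section qPochC

variable {q : ℝ}

@[simp]
theorem qPochC_zero (a : ℂ) (q : ℝ) : qPochC a q 0 = 1 := prod_range_zero _

theorem qPochC_succ (a : ℂ) (q : ℝ) (n : ℕ) :
    qPochC a q (n + 1) = qPochC a q n * (1 - a * q ^ n) :=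
  prod_range_succ _ _

theorem qPochC_succ' (a : ℂ) (q : ℝ) (n : ℕ) :
    qPochC a q (n + 1) = (1 - a) * qPochC (q * a) q n := by
  simp only [qPochC, prod_range_succ', pow_zero, mul_one, pow_succ', mul_comm (1 - a)]
  congr 1
  exact prod_congr rfl fun i _ => by ring

@[simp]
theorem qPochC_zero_left (q : ℝ) (n : ℕ) : qPochC 0 q n = 1 := by simp [qPochC]

theorem continuous_qPochC (q : ℝ) (n : ℕ) : Continuous fun a => qPochC a q n := by
  unfold qPochC; fun_prop

theorem norm_ofReal_pow_mul_le (hq : |q| ≤ 1) (b : ℂ) (k : ℕ) : ‖(q:ℂ) ^ k * b‖ ≤ ‖b‖ := by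
  rw [norm_mul, norm_pow, Complex.norm_real, Real.norm_eq_abs]
  exact mul_le_of_le_one_left (norm_nonneg b) (pow_le_one₀ (abs_nonneg q) hq)

theorem one_sub_pow_le_norm_qPochC (hq : |q| ≤ 1) {a : ℂ} {s : ℝ} (ha : ‖a‖ ≤ s)
    (hs : s ≤ 1) (n : ℕ) : (1 - s) ^ n ≤ ‖qPochC a q n‖ := by
  rw [qPochC, norm_prod, show (1 - s) ^ n = ∏ _i ∈ range n, (1 - s) by simp]
  refine prod_le_prod (fun _ _ => sub_nonneg.2 hs) fun i _ => ?_
  have hai : ‖a * (q:ℂ) ^ i‖ ≤ s := by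
    rw [mul_comm]
    exact (norm_ofReal_pow_mul_le hq a i).trans ha
  have := norm_sub_norm_le (1 : ℂ) (a * (q:ℂ) ^ i)
  rw [norm_one] at this
  linarith

theorem qPochC_ne_zero (hq : |q| ≤ 1) {a : ℂ} (ha : ‖a‖ < 1) (n : ℕ) : qPochC a q n ≠ 0 :=
  norm_pos_iff.mp <| (pow_pos (by linarith) n).trans_le
    (one_sub_pow_le_norm_qPochC hq le_rfl ha.le n)

theorem one_sub_mul_pow_ne_zero (hq : |q| ≤ 1) {a : ℂ} (ha : ‖a‖ < 1) (n : ℕ) :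
    1 - a * (q:ℂ) ^ n ≠ 0 :=
  right_ne_zero_of_mul (qPochC_succ a q n ▸ qPochC_ne_zero hq ha (n + 1))

theorem multipliable_one_sub_mul_pow (hq : |q| < 1) (b : ℂ) :
    Multipliable fun m : ℕ => 1 - b * (q:ℂ) ^ m := by
  have hq' : ‖(q:ℂ)‖ < 1 := by rwa [Complex.norm_real, Real.norm_eq_abs]
  simpa [sub_eq_add_neg] using Complex.multipliable_one_add_of_summable
    ((summable_geometric_of_norm_lt_one hq').mul_left b).neg

theorem tendsto_qPochC (hq : |q| < 1) (b : ℂ) :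
    Tendsto (qPochC b q) atTop (𝓝 (qPochInfC b q)) :=
  (multipliable_one_sub_mul_pow hq b).hasProd.tendsto_prod_nat

end qPochC

namespace Cauchy

variable {q : ℝ}

noncomputable def shiftedTerm (q : ℝ) (c : ℂ) (j n : ℕ) : ℂ :=
  (q:ℂ) ^ (n * (n - 1) + j * n) * c ^ n / (qPochC q q n * qPochC c q (n + j))

noncomputable def shiftedSum (q : ℝ) (c : ℂ) (j : ℕ) : ℂ := ∑' n, shiftedTerm q c j n

theorem norm_shiftedTerm_le (hq : |q| < 1) {c : ℂ} {r : ℝ} (hc : ‖c‖ ≤ r) (hr : r < 1)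
    (j n : ℕ) : ‖shiftedTerm q c j n‖ ≤
      |q| ^ (n * (n - 1)) * (r / ((1 - |q|) * (1 - r))) ^ n / (1 - r) ^ j := by
  have hq' : ‖(q:ℂ)‖ = |q| := by rw [Complex.norm_real, Real.norm_eq_abs]
  have hden : (1 - |q|) ^ n * (1 - r) ^ (n + j) ≤ ‖qPochC q q n * qPochC c q (n + j)‖ := by
    rw [norm_mul]
    gcongr
    · exact one_sub_pow_le_norm_qPochC hq.le hq'.le hq.le n
    · exact one_sub_pow_le_norm_qPochC hq.le hc hr.le _
  have hnum : ‖(q:ℂ) ^ (n * (n - 1) + j * n) * c ^ n‖ ≤ |q| ^ (n * (n - 1)) * r ^ n := by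
    rw [norm_mul, norm_pow, norm_pow, hq']
    exact mul_le_mul (pow_le_pow_of_le_one (abs_nonneg q) hq.le (Nat.le_add_right _ _))
      (pow_le_pow_left₀ (norm_nonneg c) hc n) (by positivity) (by positivity)
  have h1q : 0 < 1 - |q| := by linarith
  have h1r : 0 < 1 - r := by linarith
  have hr0 : 0 ≤ r := (norm_nonneg c).trans hc
  calc ‖shiftedTerm q c j n‖
      ≤ |q| ^ (n * (n - 1)) * r ^ n / ((1 - |q|) ^ n * (1 - r) ^ (n + j)) := by
        rw [shiftedTerm, norm_div]
        exact div_le_div₀ (by positivity) hnum (by positivity) hden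
    _ = _ := by rw [div_pow, mul_pow, pow_add]; field_simp

theorem summable_shiftedTerm (hq : |q| < 1) {c : ℂ} (hc : ‖c‖ < 1) (j : ℕ) :
    Summable (shiftedTerm q c j) :=
  .of_norm_bounded ((summable_pow_mul_sub_one_mul_pow (by rwa [abs_abs]) _).div_const _)
    (norm_shiftedTerm_le hq le_rfl hc j)

theorem exists_norm_shiftedSum_le (hq : |q| < 1) {c : ℂ} (hc : ‖c‖ < 1) :
    ∃ C, 0 ≤ C ∧ ∀ j, ‖shiftedSum q c j‖ ≤ C / (1 - ‖c‖) ^ j := by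
  set f := fun n : ℕ => |q| ^ (n * (n - 1)) * (‖c‖ / ((1 - |q|) * (1 - ‖c‖))) ^ n
  have hf : Summable f := summable_pow_mul_sub_one_mul_pow (by rwa [abs_abs]) _
  have hbound := norm_shiftedTerm_le hq le_rfl hc
  refine ⟨∑' n, f n, tsum_nonneg fun n => (norm_nonneg _).trans (by simpa using hbound 0 n),
    fun j => ?_⟩
  rw [← tsum_div_const]
  exact tsum_of_norm_bounded (hf.div_const _).hasSum (hbound j)

theorem shiftedTerm_recurrence_zero (hq : |q| < 1) {c : ℂ} (hc : ‖c‖ < 1) (j : ℕ) :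
    shiftedTerm q c j 0 - (1 - c * q ^ j) * shiftedTerm q c (j + 1) 0 = 0 := by
  have hP := qPochC_ne_zero hq.le hc j
  have hfac := one_sub_mul_pow_ne_zero hq.le hc j
  simp only [shiftedTerm, zero_mul, mul_zero, add_zero, zero_add, pow_zero, qPochC_zero,
    qPochC_succ]
  field_simp
  ring

theorem shiftedTerm_recurrence_succ (hq : |q| < 1) {c : ℂ} (hc : ‖c‖ < 1) (j n : ℕ) :
    shiftedTerm q c j (n + 1) - (1 - c * q ^ j) * shiftedTerm q c (j + 1) (n + 1) =
      c * q ^ j * shiftedTerm q c (j + 2) n := by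
  have hq' : ‖(q:ℂ)‖ < 1 := by rwa [Complex.norm_real, Real.norm_eq_abs]
  have hPq := qPochC_ne_zero hq.le hq' n
  have hPc := qPochC_ne_zero hq.le hc (n + 1 + j)
  have hfq := one_sub_mul_pow_ne_zero hq.le hq' n
  have hfc := one_sub_mul_pow_ne_zero hq.le hc (n + 1 + j)
  have hexp : (n + 1) * (n + 1 - 1) = n * (n - 1) + 2 * n := by
    rcases n with _ | m
    · rfl
    · simp only [Nat.add_sub_cancel]; ring
  simp only [shiftedTerm, hexp, show n + 1 + (j + 1) = n + 1 + j + 1 by ring,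
    show n + (j + 2) = n + 1 + j + 1 by ring, qPochC_succ _ _ (n + 1 + j), qPochC_succ _ _ n]
  field_simp
  ring

theorem shiftedSum_sub_succ (hq : |q| < 1) {c : ℂ} (hc : ‖c‖ < 1) (j : ℕ) :
    shiftedSum q c j - shiftedSum q c (j + 1) =
      -(c * q ^ j) * (shiftedSum q c (j + 1) - shiftedSum q c (j + 2)) := by
  have hA := summable_shiftedTerm hq hc
  have hB := (hA (j + 1)).mul_left (1 - c * q ^ j)
  have hsum : shiftedSum q c j - (1 - c * q ^ j) * shiftedSum q c (j + 1) =
      c * q ^ j * shiftedSum q c (j + 2) := by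
    rw [shiftedSum, shiftedSum, shiftedSum, ← tsum_mul_left, ← tsum_mul_left,
      ← (hA j).tsum_sub hB, ((hA j).sub hB).tsum_eq_zero_add]
    simp only [shiftedTerm_recurrence_zero hq hc, shiftedTerm_recurrence_succ hq hc, zero_add]
  linear_combination hsum

theorem shiftedSum_zero_sub_one_eq_prod_mul (hq : |q| < 1) {c : ℂ} (hc : ‖c‖ < 1) (j : ℕ) :
    shiftedSum q c 0 - shiftedSum q c 1 =
      (∏ i ∈ range j, -(c * q ^ i)) * (shiftedSum q c j - shiftedSum q c (j + 1)) := by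
  induction j with
  | zero => simp
  | succ k ih => rw [ih, shiftedSum_sub_succ hq hc k, prod_range_succ]; ring

theorem shiftedSum_zero_eq_shiftedSum_one (hq : |q| < 1) {c : ℂ} (hc : ‖c‖ < 1) :
    shiftedSum q c 0 = shiftedSum q c 1 := by
  obtain ⟨C, hC0, hC⟩ := exists_norm_shiftedSum_le hq hc
  have h1c : 0 < 1 - ‖c‖ := by linarith
  have hdiff (j : ℕ) :
      ‖shiftedSum q c j - shiftedSum q c (j + 1)‖ ≤ 2 * C / (1 - ‖c‖) ^ (j + 1) :=
    calc ‖shiftedSum q c j - shiftedSum q c (j + 1)‖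
        ≤ C / (1 - ‖c‖) ^ j + C / (1 - ‖c‖) ^ (j + 1) :=
          (norm_sub_le _ _).trans (add_le_add (hC j) (hC (j + 1)))
      _ ≤ C / (1 - ‖c‖) ^ (j + 1) + C / (1 - ‖c‖) ^ (j + 1) := by
        gcongr ?_ + _
        exact div_le_div_of_nonneg_left hC0 (pow_pos h1c _)
          (pow_le_pow_of_le_one h1c.le (by linarith [norm_nonneg c]) (Nat.le_succ j))
      _ = 2 * C / (1 - ‖c‖) ^ (j + 1) := by ring
  have hbound (j : ℕ) : ‖shiftedSum q c 0 - shiftedSum q c 1‖ ≤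
      2 * C / (1 - ‖c‖) * ∏ i ∈ range j, (|q| ^ i * (‖c‖ / (1 - ‖c‖))) := by
    rw [shiftedSum_zero_sub_one_eq_prod_mul hq hc j, norm_mul, norm_prod]
    calc (∏ i ∈ range j, ‖-(c * q ^ i)‖) * ‖shiftedSum q c j - shiftedSum q c (j + 1)‖
        ≤ (∏ i ∈ range j, ‖-(c * q ^ i)‖) * (2 * C / (1 - ‖c‖) ^ (j + 1)) := by
          gcongr; exact hdiff j
      _ = _ := by
          simp only [norm_neg, norm_mul, norm_pow, Complex.norm_real, Real.norm_eq_abs,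
            prod_mul_distrib, prod_const, card_range, div_pow, pow_succ]
          field_simp
  have hprod : Tendsto (fun j => ∏ i ∈ range j, (|q| ^ i * (‖c‖ / (1 - ‖c‖)))) atTop (𝓝 0) :=
    (summable_prod_range_of_tendsto_zero ((tendsto_pow_atTop_nhds_zero_of_lt_one (abs_nonneg q)
      hq).mul_const _ |>.trans (by simp))).tendsto_atTop_zero
  have hzero : ‖shiftedSum q c 0 - shiftedSum q c 1‖ ≤ 0 :=
    ge_of_tendsto' (by simpa using hprod.const_mul (2 * C / (1 - ‖c‖))) hbound
  exact sub_eq_zero.1 (norm_le_zero_iff.1 hzero)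

theorem shiftedTerm_mul_left (hq : |q| < 1) {c : ℂ} (hc : ‖c‖ < 1) (n : ℕ) :
    shiftedTerm q (q * c) 0 n = (1 - c) * shiftedTerm q c 1 n := by
  have hq' : ‖(q:ℂ)‖ < 1 := by rwa [Complex.norm_real, Real.norm_eq_abs]
  have hqc : ‖(q:ℂ) * c‖ < 1 := by simpa using (norm_ofReal_pow_mul_le hq.le c 1).trans_lt hc
  have hPq := qPochC_ne_zero hq.le hq' n
  have hPqc := qPochC_ne_zero hq.le hqc n
  have hc1 : 1 - c ≠ 0 := by simpa using one_sub_mul_pow_ne_zero hq.le hc 0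
  rw [shiftedTerm, shiftedTerm, qPochC_succ' c q n]
  simp only [zero_mul, one_mul, add_zero, mul_pow, pow_add]
  field_simp

theorem shiftedSum_mul_left (hq : |q| < 1) {c : ℂ} (hc : ‖c‖ < 1) :
    shiftedSum q (q * c) 0 = (1 - c) * shiftedSum q c 0 := by
  rw [shiftedSum_zero_eq_shiftedSum_one hq hc, shiftedSum, shiftedSum, ← tsum_mul_left]
  exact tsum_congr (shiftedTerm_mul_left hq hc)

theorem shiftedSum_pow_mul (hq : |q| < 1) {b : ℂ} (hb : ‖b‖ < 1) (k : ℕ) :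
    shiftedSum q (q ^ k * b) 0 = qPochC b q k * shiftedSum q b 0 := by
  induction k with
  | zero => simp
  | succ k ih =>
    rw [pow_succ', mul_assoc,
      shiftedSum_mul_left hq ((norm_ofReal_pow_mul_le hq.le b k).trans_lt hb), ih, qPochC_succ]
    ring

@[simp]
theorem shiftedSum_at_zero (q : ℝ) (j : ℕ) : shiftedSum q 0 j = 1 := by
  rw [shiftedSum, tsum_eq_single 0 fun n hn => by simp [shiftedTerm, hn]]
  simp [shiftedTerm]

theorem continuousAt_shiftedTerm (hq : |q| < 1) {c : ℂ} (hc : ‖c‖ < 1) (j n : ℕ) :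
    ContinuousAt (fun c => shiftedTerm q c j n) c := by
  have hq' : ‖(q:ℂ)‖ < 1 := by rwa [Complex.norm_real, Real.norm_eq_abs]
  refine (continuous_const.mul (continuous_pow n)).continuousAt.div
    (continuous_const.mul (continuous_qPochC q _)).continuousAt ?_
  exact mul_ne_zero (qPochC_ne_zero hq.le hq' n) (qPochC_ne_zero hq.le hc _)

theorem tendsto_shiftedSum_pow_mul (hq : |q| < 1) {b : ℂ} (hb : ‖b‖ < 1) :
    Tendsto (fun k => shiftedSum q (q ^ k * b) 0) atTop (𝓝 1) := by
  have hpow : Tendsto (fun k => (q:ℂ) ^ k * b) atTop (𝓝 0) := by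
    simpa using (tendsto_pow_atTop_nhds_zero_of_norm_lt_one
      (by rwa [Complex.norm_real, Real.norm_eq_abs])).mul_const b
  rw [← shiftedSum_at_zero q 0]
  refine tendsto_tsum_of_dominated_convergence
    ((summable_pow_mul_sub_one_mul_pow (by rwa [abs_abs]) _).div_const _)
    (fun n => (continuousAt_shiftedTerm hq (by simp) 0 n).tendsto.comp hpow)
    (.of_forall fun k => norm_shiftedTerm_le hq (norm_ofReal_pow_mul_le hq.le b k) hb 0)

end Cauchy

/-- Cauchy's identity: for 0 < q < 1 and |b| < 1,
Σ_{n≥0} q^{n(n-1)} bⁿ/((q;q)ₙ(b;q)ₙ) = 1/(b;q)_∞. -/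
theorem stmt_15 (q : ℝ) (b : ℂ) (hq : 0 < q) (hq1 : q < 1) (hb : ‖b‖ < 1) :
    (∑' n : ℕ, (q:ℂ) ^ (n * (n-1)) * b ^ n / (qPochC (q:ℂ) q n * qPochC b q n)) =
      (qPochInfC b q)⁻¹ := by
  have hq' : |q| < 1 := abs_lt.2 ⟨by linarith, hq1⟩
  have hlim : Tendsto (fun k => Cauchy.shiftedSum q (q ^ k * b) 0) atTop
      (𝓝 (qPochInfC b q * Cauchy.shiftedSum q b 0)) := by
    simpa only [Cauchy.shiftedSum_pow_mul hq' hb] using (tendsto_qPochC hq' b).mul_const _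
  have hprod : qPochInfC b q * Cauchy.shiftedSum q b 0 = 1 :=
    tendsto_nhds_unique hlim (Cauchy.tendsto_shiftedSum_pow_mul hq' hb)
  rw [inv_eq_of_mul_eq_one_right hprod]
  exact tsum_congr fun n => by simp [Cauchy.shiftedTerm]
end

section
/- For 0 < q < 1 and real α > -1, the determinant of the Hankel matrix ((q^{α+1};q)_{j+k})_{0≤j,k≤n} equals q^{n(n+1)α/2} q^{n(n+1)(2n+1)/6} ∏_{k=0}^{n} (q;q)_k (q^{α+1};q)_k. -/
open Finset

noncomputable def qHankel (a q : ℝ) (n : ℕ) : Matrix (Fin n) (Fin n) ℝ :=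
  Matrix.of fun j k => qPoch a q (j + k)

lemma qPoch_zero (a q : ℝ) : qPoch a q 0 = 1 := prod_range_zero _

lemma qPoch_succ (a q : ℝ) (n : ℕ) : qPoch a q (n + 1) = qPoch a q n * (1 - a * q ^ n) :=
  prod_range_succ _ _

lemma qPoch_succ' (a q : ℝ) (n : ℕ) : qPoch a q (n + 1) = (1 - a) * qPoch (a * q) q n := by
  unfold qPoch
  rw [prod_range_succ', pow_zero, mul_one, mul_comm]
  exact congrArg _ (prod_congr rfl fun i _ => by ring)

lemma qPoch_succ_add_sub (a q : ℝ) (i k : ℕ) :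
    qPoch a q (i + 1 + k) - (1 - a * q ^ i) * qPoch a q (i + k) =
      a * q ^ i * (1 - q ^ k) * qPoch a q (i + k) := by
  rw [add_right_comm, qPoch_succ, pow_add]
  ring

lemma det_qHankel_succ (a q : ℝ) (n : ℕ) :
    (qHankel a q (n + 1)).det =
      (∏ j : Fin n, a * q ^ (j : ℕ)) * (∏ k : Fin n, (1 - q ^ ((k : ℕ) + 1)) * (1 - a)) *
        (qHankel (a * q) q n).det := by
  set R : Matrix (Fin (n + 1)) (Fin (n + 1)) ℝ := Matrix.of (Fin.cons (fun k => qPoch a q k)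
    fun i k => a * q ^ (i : ℕ) * (1 - q ^ (k : ℕ)) * qPoch a q (i + k))
  have hrow : (qHankel a q (n + 1)).det = R.det := by
    refine Matrix.det_eq_of_forall_row_eq_smul_add_pred (fun i => 1 - a * q ^ (i : ℕ))
      (fun k => by simp [R, qHankel]) fun i k => ?_
    simp only [R, qHankel, Matrix.of_apply, Fin.cons_succ, Fin.val_succ, Fin.val_castSucc]
    linarith [qPoch_succ_add_sub a q i k]
  have hcol : ∀ i : Fin n, R i.succ 0 = 0 := fun i => by simp [R]
  have hminor : R.submatrix Fin.succ Fin.succ =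
      Matrix.of fun (j k : Fin n) => a * q ^ (j : ℕ) * (Matrix.of fun (j k : Fin n) =>
        (1 - q ^ ((k : ℕ) + 1)) * (1 - a) * qHankel (a * q) q n j k) j k := by
    ext j k
    simp only [R, qHankel, Matrix.submatrix_apply, Matrix.of_apply, Fin.cons_succ, Fin.val_succ]
    rw [← add_assoc, qPoch_succ']
    ring
  rw [hrow, Matrix.det_succ_column_zero, Fin.sum_univ_succ]
  simp only [hcol, mul_zero, zero_mul, sum_const_zero, add_zero, Fin.succAbove_zero, hminor,
    Matrix.det_mul_column, Matrix.det_mul_row]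
  simp [R, qPoch_zero, mul_assoc]

theorem det_qHankel (a q : ℝ) (n : ℕ) :
    (qHankel a q n).det =
      ∏ k ∈ range n, a ^ k * q ^ (k * (k - 1)) * (qPoch q q k * qPoch a q k) := by
  induction n generalizing a with
  | zero => simp [qHankel]
  | succ n ih =>
    rw [det_qHankel_succ, ih, prod_range_succ', Fin.prod_univ_eq_prod_range (fun k => a * q ^ k),
      Fin.prod_univ_eq_prod_range (fun k => (1 - q ^ (k + 1)) * (1 - a)),
      ← prod_mul_distrib, ← prod_mul_distrib]
    simp only [zero_mul, pow_zero, mul_one, qPoch_zero]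
    refine prod_congr rfl fun k _ => ?_
    have hexp : (k + 1) * (k + 1 - 1) = k * (k - 1) + 2 * k := by cases k <;> simp; ring
    rw [hexp, qPoch_succ q, qPoch_succ' a, pow_add, ← pow_succ']
    ring

lemma sum_range_succ_sq (n : ℕ) :
    ∑ k ∈ range (n + 1), k ^ 2 = n * (n + 1) * (2 * n + 1) / 6 := by
  refine (Nat.div_eq_of_eq_mul_left (by norm_num) ?_).symm
  induction n with
  | zero => simp
  | succ n ih => rw [sum_range_succ, add_mul _ _ 6, ← ih]; ring

theorem stmt_16_general (q α : ℝ) (hq : 0 < q) (n : ℕ) :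
    (Matrix.of fun j k : Fin (n+1) => qPoch (q ^ (α+1)) q (j.1 + k.1)).det =
      q ^ ((n:ℝ) * (n+1) * α / 2) * q ^ (n * (n+1) * (2*n+1) / 6) *
        ∏ k ∈ Finset.range (n+1), qPoch q q k * qPoch (q ^ (α+1)) q k := by
  have hpow (k : ℕ) : (q ^ (α + 1)) ^ k * q ^ (k * (k - 1)) = (q ^ α) ^ k * q ^ (k ^ 2) := by
    rw [Real.rpow_add_one hq.ne', mul_pow, mul_assoc, ← pow_add]
    congr 2
    cases k <;> simp; ring
  have hgauss : ((∑ k ∈ range (n + 1), k : ℕ) : ℝ) = n * (n + 1) / 2 := by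
    have h := sum_range_id_mul_two (n + 1)
    rw [Nat.add_sub_cancel] at h
    rw [eq_div_iff two_ne_zero]
    exact_mod_cast h.trans (mul_comm _ _)
  rw [show Matrix.of _ = qHankel (q ^ (α + 1)) q (n + 1) from rfl, det_qHankel]
  simp only [hpow, prod_mul_distrib, prod_pow_eq_pow_sum, ← sum_range_succ_sq]
  rw [prod_pow_eq_pow_sum (range (n + 1)) (fun k => k), ← Real.rpow_natCast (q ^ α),
    ← Real.rpow_mul hq.le, hgauss, mul_comm α, div_mul_eq_mul_div]

/-- det ((q^{α+1};q)_{j+k})_{0≤j,k≤n}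
= q^{n(n+1)α/2} q^{n(n+1)(2n+1)/6} ∏_{k=0}^n (q;q)_k (q^{α+1};q)_k. -/
theorem stmt_16 (q α : ℝ) (hq : 0 < q) (hq1 : q < 1) (hα : -1 < α) (n : ℕ) :
    (Matrix.of fun j k : Fin (n+1) => qPoch (q ^ (α+1)) q (j.1 + k.1)).det =
      q ^ ((n:ℝ) * (n+1) * α / 2) * q ^ (n * (n+1) * (2*n+1) / 6) *
        ∏ k ∈ Finset.range (n+1), qPoch q q k * qPoch (q ^ (α+1)) q k :=
  stmt_16_general q α hq n
end
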